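/- Let M : ℝⁿ → ℝ^{n×n} be differentiable with M(q) symmetric and invertible for every q. Fix q, p ∈ ℝⁿ and set v := M(q)⁻¹p. Define the matrices S(q,v) and N(q,v) by S(q,v)_{ij} := (1/2)·Σ_{k=1}^{n} v_k·(∂M_{ik}/∂q_j(q) − ∂M_{jk}/∂q_i(q)) and N(q,v)_{ij} := Σ_{k=1}^{n} (∂M_{ij}/∂q_k)(q)·v_k. Then [S(q,v) − (1/2)·N(q,v)]·v = ∇_q[(1/2)·pᵀM(q)⁻¹p], where the gradient on the right is the gradient at q of the map q ↦ (1/2)·pᵀM(q)⁻¹p with p held fixed. -/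

import Mathlib

/-!
Matrix inversion has derivative `∂ᵢ(M⁻¹) = -M⁻¹ (∂ᵢM) M⁻¹`, so for symmetric `M` and
`v = M⁻¹p` the gradient of `½ pᵀM⁻¹p` has components `-½ vᵀ(∂ᵢM)v`. On the other side,
exchanging the summation indices in the first half of `S v` turns it into `½ Ṁv`, so
`S v = ½ (Ṁv - (vᵀ(∂ᵢM)v)ᵢ)` and `(S - ½Ṁ)v` is the same vector.
-/

open Matrix

/-- Partial derivative of a scalar function on `ℝⁿ` at `q` in the `i`-th coordinate direction. -/
noncomputable def pderivAt {n : ℕ} (f : (Fin n → ℝ) → ℝ) (q : Fin n → ℝ) (i : Fin n) : ℝ :=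
  fderiv ℝ f q (Pi.single i 1)

/-- The skew-symmetric Coriolis-type matrix
`S(q,v)_{ij} = (1/2)Σ_k v_k (∂M_{ik}/∂q_j − ∂M_{jk}/∂q_i)`. -/
noncomputable def coriolisS {n : ℕ} (M : (Fin n → ℝ) → Matrix (Fin n) (Fin n) ℝ)
    (q v : Fin n → ℝ) : Matrix (Fin n) (Fin n) ℝ :=
  Matrix.of fun i j =>
    (1/2 : ℝ) * ∑ k, v k *
      (pderivAt (fun q' => M q' i k) q j - pderivAt (fun q' => M q' j k) q i)

/-- The derivative of `M` along the velocity `v`: `N(q,v)_{ij} = Σ_k (∂M_{ij}/∂q_k) v_k`. -/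
noncomputable def mDot {n : ℕ} (M : (Fin n → ℝ) → Matrix (Fin n) (Fin n) ℝ)
    (q v : Fin n → ℝ) : Matrix (Fin n) (Fin n) ℝ :=
  Matrix.of fun i j => ∑ k, pderivAt (fun q' => M q' i j) q k * v k

noncomputable def pderivMatrix {n : ℕ} {ι κ : Type*} (A : (Fin n → ℝ) → Matrix ι κ ℝ)
    (q : Fin n → ℝ) (i : Fin n) : Matrix ι κ ℝ :=
  Matrix.of fun a b => pderivAt (fun q' => A q' a b) q i

section MatrixCalculus

-- Matrices carry no global norm. We use the ℓ∞ operator norm because on square matrices it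
-- is a normed algebra norm, as the derivative of `Ring.inverse` requires; differentiability
-- does not depend on the choice, and the lemmas used later mention no norm.
attribute [local instance] Matrix.linftyOpNormedAddCommGroup Matrix.linftyOpNormedSpace

variable {ι κ : Type*} [Fintype ι] [Fintype κ]

theorem differentiableAt_matrix_iff {E : Type*} [NormedAddCommGroup E] [NormedSpace ℝ E]
    {A : E → Matrix ι κ ℝ} {x : E} :
    DifferentiableAt ℝ A x ↔ ∀ a b, DifferentiableAt ℝ (fun x => A x a b) x := by
  let e : Matrix ι κ ℝ ≃L[ℝ] (ι → κ → ℝ) := (Matrix.ofLinearEquiv ℝ).symm.toContinuousLinearEquiv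
  refine e.comp_differentiableAt_iff.symm.trans ?_
  rw [differentiableAt_pi]
  simp only [differentiableAt_pi]
  rfl

theorem HasFDerivAt.apply_pi_single_eq_pderivMatrix {n : ℕ} {A : (Fin n → ℝ) → Matrix ι κ ℝ}
    {A' : (Fin n → ℝ) →L[ℝ] Matrix ι κ ℝ} {q : Fin n → ℝ} (hA : HasFDerivAt A A' q) (i : Fin n) :
    A' (Pi.single i 1) = pderivMatrix A q i := by
  ext a b
  let entry : Matrix ι κ ℝ →L[ℝ] ℝ := (Matrix.entryLinearMap ℝ ℝ a b).toContinuousLinearMap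
  exact congrArg (· (Pi.single i 1)) (entry.hasFDerivAt.comp q hA).fderiv.symm

theorem pderivAt_linearMap_comp {n : ℕ} {A : (Fin n → ℝ) → Matrix ι κ ℝ} {q : Fin n → ℝ}
    (hA : ∀ a b, DifferentiableAt ℝ (fun q => A q a b) q) (L : Matrix ι κ ℝ →ₗ[ℝ] ℝ)
    (i : Fin n) : pderivAt (fun q => L (A q)) q i = L (pderivMatrix A q i) := by
  have hA' := differentiableAt_matrix_iff.mpr hA
  have hLA : HasFDerivAt (fun q => L (A q)) (L.toContinuousLinearMap.comp (fderiv ℝ A q)) q :=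
    L.toContinuousLinearMap.hasFDerivAt.comp q hA'.hasFDerivAt
  rw [← hA'.hasFDerivAt.apply_pi_single_eq_pderivMatrix, pderivAt, hLA.fderiv]
  rfl

end MatrixCalculus

section MatrixInverseCalculus

attribute [local instance] Matrix.linftyOpNormedRing Matrix.linftyOpNormedAlgebra

variable {ι : Type*} [Fintype ι] [DecidableEq ι]

theorem differentiableAt_inv_apply {n : ℕ} {A : (Fin n → ℝ) → Matrix ι ι ℝ} {q : Fin n → ℝ}
    (hA : ∀ a b, DifferentiableAt ℝ (fun q => A q a b) q) (hdet : IsUnit (A q).det) (a b : ι) :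
    DifferentiableAt ℝ (fun q => (A q)⁻¹ a b) q := by
  refine differentiableAt_matrix_iff.mp ?_ a b
  simp only [Matrix.nonsing_inv_eq_ringInverse]
  exact (differentiableAt_matrix_iff.mpr hA).inverse ((A q).isUnit_iff_isUnit_det.mpr hdet)

theorem pderivMatrix_inv {n : ℕ} {A : (Fin n → ℝ) → Matrix ι ι ℝ} {q : Fin n → ℝ}
    (hA : ∀ a b, DifferentiableAt ℝ (fun q => A q a b) q) (hdet : IsUnit (A q).det)
    (i : Fin n) :
    pderivMatrix (fun q => (A q)⁻¹) q i = -((A q)⁻¹ * pderivMatrix A q i * (A q)⁻¹) := by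
  have hA' := differentiableAt_matrix_iff.mpr hA
  obtain ⟨u, hu⟩ := (A q).isUnit_iff_isUnit_det.mpr hdet
  have hinv : HasFDerivAt (fun q => (A q)⁻¹)
      ((-ContinuousLinearMap.mulLeftRight ℝ _ ↑u⁻¹ ↑u⁻¹).comp (fderiv ℝ A q)) q := by
    simp only [Matrix.nonsing_inv_eq_ringInverse]
    exact (hu ▸ hasFDerivAt_ringInverse u).comp q hA'.hasFDerivAt
  rw [← hinv.apply_pi_single_eq_pderivMatrix, ← hA'.hasFDerivAt.apply_pi_single_eq_pderivMatrix,
    ← hu, Matrix.coe_units_inv]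
  rfl

end MatrixInverseCalculus

theorem pderivAt_const_mul_dotProduct_inv_mulVec {ι : Type*} [Fintype ι] [DecidableEq ι] {n : ℕ}
    {A : (Fin n → ℝ) → Matrix ι ι ℝ} {q : Fin n → ℝ}
    (hA : ∀ a b, DifferentiableAt ℝ (fun q => A q a b) q) (hsymm : (A q).IsSymm)
    (hdet : IsUnit (A q).det) (c : ℝ) (p : ι → ℝ) (i : Fin n) :
    pderivAt (fun q' => c * (p ⬝ᵥ ((A q')⁻¹ *ᵥ p))) q i
      = -c * ((A q)⁻¹ *ᵥ p ⬝ᵥ (pderivMatrix A q i *ᵥ ((A q)⁻¹ *ᵥ p))) := by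
  let L : Matrix ι ι ℝ →ₗ[ℝ] ℝ :=
    { toFun := fun B => c * (p ⬝ᵥ (B *ᵥ p))
      map_add' := fun B C => by simp only [add_mulVec, dotProduct_add, mul_add]
      map_smul' := fun r B => by
        simp only [smul_mulVec, dotProduct_smul, smul_eq_mul, RingHom.id_apply]; ring }
  have hGp : p ᵥ* (A q)⁻¹ = (A q)⁻¹ *ᵥ p := by
    rw [← mulVec_transpose, hsymm.inv.eq]
  calc pderivAt (fun q' => L (A q')⁻¹) q i
      = c * (p ⬝ᵥ (-((A q)⁻¹ * pderivMatrix A q i * (A q)⁻¹) *ᵥ p)) := by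
        rw [pderivAt_linearMap_comp (differentiableAt_inv_apply hA hdet), pderivMatrix_inv hA hdet]
        rfl
    _ = -c * ((A q)⁻¹ *ᵥ p ⬝ᵥ (pderivMatrix A q i *ᵥ ((A q)⁻¹ *ᵥ p))) := by
        rw [neg_mulVec, dotProduct_neg, ← mulVec_mulVec, ← mulVec_mulVec, dotProduct_mulVec, hGp]
        ring

theorem coriolisS_mulVec {n : ℕ} (M : (Fin n → ℝ) → Matrix (Fin n) (Fin n) ℝ) (q v : Fin n → ℝ) :
    coriolisS M q v *ᵥ v
      = (1/2 : ℝ) • (mDot M q v *ᵥ v - fun i => v ⬝ᵥ (pderivMatrix M q i *ᵥ v)) := by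
  ext i
  simp only [coriolisS, mDot, pderivMatrix, mulVec, dotProduct, of_apply, Pi.smul_apply,
    Pi.sub_apply, smul_eq_mul, mul_sub, sub_mul, Finset.sum_sub_distrib, Finset.sum_mul,
    Finset.mul_sum]
  congr 1
  · rw [Finset.sum_comm]
    exact Finset.sum_congr rfl fun _ _ => Finset.sum_congr rfl fun _ _ => by ring
  · exact Finset.sum_congr rfl fun _ _ => Finset.sum_congr rfl fun _ _ => by ring

theorem coriolis_property_hamiltonian
    {n : ℕ}
    (M : (Fin n → ℝ) → Matrix (Fin n) (Fin n) ℝ)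
    (hMdiff : ∀ i j, Differentiable ℝ fun q => M q i j)
    (hMsymm : ∀ q, (M q).IsSymm)
    (hMinv : ∀ q, IsUnit (M q).det)
    (q p v : Fin n → ℝ) (hv : v = (M q)⁻¹ *ᵥ p) :
    (coriolisS M q v - (1/2 : ℝ) • mDot M q v) *ᵥ v
      = fun i => pderivAt (fun q' => (1/2 : ℝ) * (p ⬝ᵥ ((M q')⁻¹ *ᵥ p))) q i := by
  funext i
  rw [pderivAt_const_mul_dotProduct_inv_mulVec (fun a b => (hMdiff a b).differentiableAt)
    (hMsymm q) (hMinv q), ← hv, sub_mulVec, coriolisS_mulVec, smul_mulVec]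
  simp only [Pi.sub_apply, Pi.smul_apply, smul_eq_mul]
  ring
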